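/- arXiv:2307.00704 — 2 statements merged into one kernel-verified Lean document; each statement's English description precedes it below -/
import Mathlib

section
/- Let T be a tree with nonnegative vertex weights of total weight W, rooted at a weighted centroid c (so every subtree hanging off c has weight at most W/2), with a cyclic order on the children of c. Then the subtrees hanging off c can be partitioned into at most 3 groups, each consisting of children consecutive in the cyclic order (together with their descendants), such that each group has total weight at most W/2. -/
/-!
Cut the children, in their cyclic order `0, …, d-1`, at the largest `a` whose prefix
`s 0 + ⋯ + s (a-1)` still weighs at most `W / 2`. The three blocks `[0, a)`, `{a}` and `(a, d)`
then work: the first by the choice of `a`, the second because every subtree weighs at most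
`W / 2`, and the third because the prefix through `a` already exceeds `W / 2` while all
subtrees together weigh at most `W`. None of the blocks needs to wrap around.
-/

open Finset

namespace Fin

theorem image_range_mod_eq_filter {d : ℕ} (hd : 0 < d) {a l : ℕ} (hl : l ≤ d - a) :
    (range l).image (fun j => (⟨(a + j) % d, Nat.mod_lt _ hd⟩ : Fin d)) =
      ({i | a ≤ i.val ∧ i.val < a + l} : Finset (Fin d)) := by
  ext i
  simp only [mem_image, mem_range, mem_filter, mem_univ, true_and]
  constructor
  · rintro ⟨j, hj, rfl⟩
    rw [Fin.val_mk, Nat.mod_eq_of_lt (by omega)]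
    omega
  · rintro ⟨h₁, h₂⟩
    refine ⟨i - a, by omega, Fin.ext ?_⟩
    rw [Fin.val_mk, Nat.add_sub_cancel' h₁, Nat.mod_eq_of_lt i.isLt]

theorem exists_sum_val_lt_le_and_sum_lt_val_le {M : Type*} [AddCommGroup M] [LinearOrder M]
    [IsOrderedAddMonoid M] {d : ℕ} {s : Fin d → M} {B : M} (hB : 0 ≤ B)
    (hsum : ∑ i, s i ≤ B + B) :
    ∃ a : ℕ, ∑ i : Fin d with i.val < a, s i ≤ B ∧
      ∑ i : Fin d with a < i.val, s i ≤ B := by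
  set P : ℕ → M := fun k => ∑ i : Fin d with i.val < k, s i
  set a := Nat.findGreatest (fun k => P k ≤ B) d
  have hP₀ : P 0 ≤ B := by simpa [P] using hB
  refine ⟨a, Nat.findGreatest_spec (P := fun k => P k ≤ B) (Nat.zero_le d) hP₀, ?_⟩
  by_cases ha : a < d
  · have hgt : B < P (a + 1) := not_le.1 (Nat.findGreatest_is_greatest (Nat.lt_succ_self a) ha)
    have hsplit : P (a + 1) + ∑ i : Fin d with a < i.val, s i = ∑ i, s i := by
      rw [← sum_filter_add_sum_filter_not univ (fun i : Fin d => i.val < a + 1)]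
      congr 2
      ext i; simp
    refine (lt_of_add_lt_add_left (a := B) ?_).le
    calc B + ∑ i : Fin d with a < i.val, s i
        _ < P (a + 1) + ∑ i : Fin d with a < i.val, s i := by gcongr
        _ ≤ B + B := hsplit ▸ hsum
  · rw [filter_false_of_mem fun i _ => by have := i.isLt; omega, sum_empty]
    exact hB

theorem sum_filter_val_eq_le {M : Type*} [AddCommMonoid M] [Preorder M] {d : ℕ}
    {s : Fin d → M} {B : M} (hB : 0 ≤ B) (hs : ∀ i, s i ≤ B) (a : ℕ) :
    ∑ i : Fin d with i.val = a, s i ≤ B := by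
  by_cases ha : a < d
  · rw [show ({i | i.val = a} : Finset (Fin d)) = {⟨a, ha⟩} by ext i; simp [Fin.ext_iff],
      sum_singleton]
    exact hs _
  · rw [filter_false_of_mem fun i _ => by have := i.isLt; omega, sum_empty]
    exact hB

def blocksAround (d a : ℕ) : Fin 3 → Finset (Fin d) :=
  ![({i | i.val < a} : Finset (Fin d)), ({i | i.val = a} : Finset (Fin d)),
    ({i | a < i.val} : Finset (Fin d))]

theorem disjoint_blocksAround {d a : ℕ} {g h : Fin 3} (hgh : g ≠ h) :
    Disjoint (blocksAround d a g) (blocksAround d a h) := by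
  fin_cases g <;> fin_cases h <;> simp_all [blocksAround, disjoint_filter] <;> omega

theorem exists_mem_blocksAround {d : ℕ} (a : ℕ) (i : Fin d) :
    ∃ g, i ∈ blocksAround d a g := by
  rcases lt_trichotomy i.val a with h | h | h
  exacts [⟨0, by simp [blocksAround, h]⟩, ⟨1, by simp [blocksAround, h]⟩,
    ⟨2, by simp [blocksAround, h]⟩]

theorem exists_blocksAround_eq_image_range {d : ℕ} (hd : 0 < d) (a : ℕ) (g : Fin 3) :
    ∃ b l : ℕ, blocksAround d a g =
      (range l).image (fun j => (⟨(b + j) % d, Nat.mod_lt _ hd⟩ : Fin d)) := by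
  fin_cases g
  · refine ⟨0, min a d, ?_⟩
    rw [image_range_mod_eq_filter hd (by omega)]; ext; simp [blocksAround]
  · refine ⟨a, min 1 (d - a), ?_⟩
    rw [image_range_mod_eq_filter hd (by omega)]; ext; simp [blocksAround]; omega
  · refine ⟨a + 1, d - (a + 1), ?_⟩
    rw [image_range_mod_eq_filter hd le_rfl]; ext; simp [blocksAround]; omega

end Fin

/-- `s i` is the weight of the subtree of the `i`-th child of the centroid in the cyclic order, and
`wc` the weight of the centroid itself. -/
theorem centroid_three_consecutive_groups
    (d : ℕ) (hd : 0 < d) (W wc : ℝ) (s : Fin d → ℝ)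
    (hs : ∀ i, 0 ≤ s i) (hwc : 0 ≤ wc)
    (hhalf : ∀ i, s i ≤ W / 2)
    (hsum : wc + ∑ i, s i = W) :
    ∃ S : Fin 3 → Finset (Fin d),
      (∀ g h : Fin 3, g ≠ h → Disjoint (S g) (S h)) ∧
      (∀ i : Fin d, ∃ g, i ∈ S g) ∧
      (∀ g : Fin 3, ∃ (a l : ℕ),
        S g = (Finset.range l).image
          (fun j => (⟨(a + j) % d, Nat.mod_lt _ hd⟩ : Fin d))) ∧
      (∀ g : Fin 3, ∑ i ∈ S g, s i ≤ W / 2) := by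
  have hB : 0 ≤ W / 2 := (hs ⟨0, hd⟩).trans (hhalf _)
  obtain ⟨a, hpre, hsuf⟩ :=
    Fin.exists_sum_val_lt_le_and_sum_lt_val_le (s := s) hB (by linarith)
  refine ⟨Fin.blocksAround d a, fun _ _ => Fin.disjoint_blocksAround,
    Fin.exists_mem_blocksAround a, Fin.exists_blocksAround_eq_image_range hd a, fun g => ?_⟩
  fin_cases g
  exacts [hpre, Fin.sum_filter_val_eq_le hB hhalf a, hsuf]
end

section
/- Let T: ℕ × ℕ → ℕ satisfy T(3, n) ≤ C·log n and T(k, n) ≤ C·T(⌈2k/3⌉, c·n)·log n + C·k for k ≥ 4, where C, c ≥ 2 are constants. Then T(k, n) ≤ exp(C'·(log k)·(log log n)) for some constant C' depending only on C and c, for all k ≤ n and n sufficiently large. -/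
/-!
The parameter `k` shrinks to `⌈2k/3⌉ ≤ 5k/6` at each level, and `(5/6)⁴ < 1/2`, so the potential
`log₂ (k⁴) = O(log k)` drops by at least one per level while `log₂ n` grows by at most `c`.
Unfolding the recurrence level by level therefore gives
`T(k, n) ≤ k · (C (c log₂ (k⁴) + log₂ n + 2))^{log₂ (k⁴)}`, which for `k ≤ n` is
`k · (O(C c) · log₂ n)^{O(log k)}`, a quantity whose logarithm is `O(log k · log log n)`.
-/

theorem Nat.log_mul_le_log_add_log_add_one {b : ℕ} (hb : 1 < b) (m n : ℕ) :
    Nat.log b (m * n) ≤ Nat.log b m + Nat.log b n + 1 := by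
  rcases Nat.eq_zero_or_pos (m * n) with hmn | hmn
  · simp [hmn]
  have hlt : m * n < b ^ (Nat.log b m + Nat.log b n + 2) := by
    calc m * n < b ^ (Nat.log b m + 1) * b ^ (Nat.log b n + 1) :=
          Nat.mul_lt_mul'' (Nat.lt_pow_succ_log_self hb m) (Nat.lt_pow_succ_log_self hb n)
      _ = b ^ (Nat.log b m + Nat.log b n + 2) := by rw [← pow_add]; ring_nf
  have := Nat.log_lt_of_lt_pow hmn.ne' hlt
  omega

theorem Nat.log_pow_lt_mul_log_add_one {b : ℕ} (hb : 1 < b) (n k : ℕ) (hk : k ≠ 0) :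
    Nat.log b (n ^ k) < k * (Nat.log b n + 1) := by
  refine Nat.log_lt_of_lt_pow' (by positivity) ?_
  calc n ^ k < (b ^ (Nat.log b n + 1)) ^ k :=
        Nat.pow_lt_pow_left (Nat.lt_pow_succ_log_self hb n) hk
    _ = b ^ (k * (Nat.log b n + 1)) := by rw [← pow_mul, mul_comm]

theorem natLog_two_le_two_mul_log (n : ℕ) : (Nat.log 2 n : ℝ) ≤ 2 * Real.log n := by
  have hlogb : (Nat.log 2 n : ℝ) ≤ Real.log n / Real.log 2 := by
    simpa [Real.logb] using Real.natLog_le_logb n 2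
  have hlog2 : (1 / 2 : ℝ) ≤ Real.log 2 := by linarith [Real.log_two_gt_d9]
  have hlogn : 0 ≤ Real.log n := Real.log_natCast_nonneg n
  rw [le_div_iff₀ (by positivity)] at hlogb
  nlinarith

theorem one_le_log_log {x : ℝ} (hx : 16 ≤ x) : 1 ≤ Real.log (Real.log x) := by
  have hlog16 : Real.log 16 = 4 * Real.log 2 := by
    rw [show (16 : ℝ) = 2 ^ 4 by norm_num, Real.log_pow]; norm_num
  have hlogx : Real.exp 1 ≤ Real.log x := by
    linarith [Real.log_le_log (by norm_num) hx, Real.log_two_gt_d9, Real.exp_one_lt_d9]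
  rwa [Real.le_log_iff_exp_le (by linarith [Real.exp_pos 1])]

def recDepth (k : ℕ) : ℕ := Nat.log 2 (k ^ 4)

theorem recDepth_pos {k : ℕ} (hk : 2 ≤ k) : 0 < recDepth k :=
  Nat.le_log_of_pow_le one_lt_two (hk.trans (Nat.le_self_pow (by norm_num) k))

theorem recDepth_le {k : ℕ} (hk : 2 ≤ k) : recDepth k ≤ 7 * Nat.log 2 k := by
  have hlt := Nat.log_pow_lt_mul_log_add_one one_lt_two k 4 (by norm_num)
  have hlogk : 1 ≤ Nat.log 2 k := Nat.le_log_of_pow_le one_lt_two (by simpa using hk)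
  unfold recDepth
  omega

theorem recDepth_le_log {k : ℕ} (hk : 2 ≤ k) : (recDepth k : ℝ) ≤ 14 * Real.log k := by
  have hnat : (recDepth k : ℝ) ≤ 7 * (Nat.log 2 k : ℝ) := by exact_mod_cast recDepth_le hk
  linarith [natLog_two_le_two_mul_log k]

theorem recDepth_succ_le {k : ℕ} (hk : 4 ≤ k) : recDepth ((2 * k + 2) / 3) + 1 ≤ recDepth k := by
  set m := (2 * k + 2) / 3
  have h6m : 6 * m ≤ 5 * k := by omega
  have hm : m ^ 4 * 2 ≤ k ^ 4 := by
    have := Nat.pow_le_pow_left h6m 4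
    rw [mul_pow, mul_pow] at this
    norm_num at this
    omega
  have hm0 : m ^ 4 ≠ 0 := pow_ne_zero 4 (by omega)
  calc recDepth m + 1 = Nat.log 2 (m ^ 4 * 2) := (Nat.log_mul_base one_lt_two hm0).symm
    _ ≤ recDepth k := Nat.log_mono_right hm

theorem add_mul_le_mul_pow_succ {C L k M d x : ℕ} (hM : C * (L + 1) ≤ M) (hx : x ≤ k * M ^ d) :
    C * x * L + C * k ≤ k * M ^ (d + 1) := by
  rcases Nat.eq_zero_or_pos C with rfl | hC
  · simp
  have hMd : 0 < M ^ d := pow_pos ((Nat.mul_pos hC L.succ_pos).trans_le hM) d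
  calc C * x * L + C * k ≤ C * (k * M ^ d) * L + C * k * M ^ d :=
        add_le_add (by gcongr) (Nat.le_mul_of_pos_right _ hMd)
    _ = k * M ^ d * (C * (L + 1)) := by ring
    _ ≤ k * M ^ d * M := by gcongr
    _ = k * M ^ (d + 1) := by ring

theorem le_mul_pow_recDepth (T : ℕ → ℕ → ℕ) (C c : ℕ) (hC : 0 < C)
    (hbase : ∀ n : ℕ, T 3 n ≤ C * Nat.log 2 n)
    (hrec : ∀ k n : ℕ, 4 ≤ k →
      T k n ≤ C * T ((2 * k + 2) / 3) (c * n) * Nat.log 2 n + C * k)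
    (k : ℕ) (hk : 3 ≤ k) (n : ℕ) :
    T k n ≤ k * (C * (c * recDepth k + Nat.log 2 n + 2)) ^ recDepth k := by
  induction k using Nat.strong_induction_on generalizing n with
  | _ k ih =>
  set M := C * (c * recDepth k + Nat.log 2 n + 2)
  have hCL : C * (Nat.log 2 n + 1) ≤ M := Nat.mul_le_mul_left C (by omega)
  have hM1 : 1 ≤ M := (Nat.mul_pos hC (Nat.succ_pos _)).trans_le hCL
  rcases hk.eq_or_lt with rfl | hk4
  · calc T 3 n ≤ M := (hbase n).trans (Nat.mul_le_mul_left C (by omega))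
      _ ≤ M ^ recDepth 3 := Nat.le_self_pow (recDepth_pos (by norm_num)).ne' M
      _ ≤ 3 * M ^ recDepth 3 := by omega
  obtain ⟨d, hd⟩ : ∃ d, recDepth k = d + 1 :=
    Nat.exists_eq_add_one.mpr (recDepth_pos (by omega))
  have hmd : recDepth ((2 * k + 2) / 3) ≤ d := by have := recDepth_succ_le hk4; omega
  -- `n` grows to `c * n`, but `log₂ (c n) ≤ c + log₂ n` is paid for by the drop of `recDepth`.
  have hlog :
      c * recDepth ((2 * k + 2) / 3) + Nat.log 2 (c * n) ≤ c * recDepth k + Nat.log 2 n := by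
    rcases Nat.eq_zero_or_pos c with rfl | hc
    · simp
    have := Nat.log_mul_le_log_add_log_add_one one_lt_two c n
    have := Nat.log_lt_self 2 hc.ne'
    nlinarith
  have hTm : T ((2 * k + 2) / 3) (c * n) ≤ k * M ^ d :=
    calc T ((2 * k + 2) / 3) (c * n)
        ≤ (2 * k + 2) / 3 * (C * (c * recDepth ((2 * k + 2) / 3) + Nat.log 2 (c * n) + 2))
            ^ recDepth ((2 * k + 2) / 3) := ih _ (by omega) (by omega) (c * n)
      _ ≤ k * M ^ d := Nat.mul_le_mul (by omega)
          ((Nat.pow_le_pow_left (Nat.mul_le_mul_left C (by omega)) _).trans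
            (Nat.pow_le_pow_right hM1 hmd))
  rw [hd]
  exact (hrec k n hk4).trans (add_mul_le_mul_pow_succ hCL hTm)

theorem mul_pow_recDepth_le_exp {A k n : ℕ} (hA : 1 ≤ A) (hk : 2 ≤ k) (hn : 16 ≤ n) :
    (k : ℝ) * (A * Nat.log 2 n) ^ recDepth k ≤
      Real.exp ((15 + 14 * Real.log (2 * A)) * Real.log k * Real.log (Real.log n)) := by
  have hA' : (1 : ℝ) ≤ A := by exact_mod_cast hA
  have hL : (1 : ℝ) ≤ Nat.log 2 n := by exact_mod_cast Nat.le_log_of_pow_le one_lt_two (by omega)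
  have hlogk : 0 ≤ Real.log k := Real.log_natCast_nonneg k
  have hlogA : 0 ≤ Real.log (2 * A) := Real.log_nonneg (by linarith)
  have hloglog : 1 ≤ Real.log (Real.log n) := one_le_log_log (by exact_mod_cast hn)
  have hdepth := recDepth_le_log hk
  have hlogn : 0 < Real.log n := Real.log_pos (by exact_mod_cast (by omega : 1 < n))
  have hlogAL : Real.log (A * Nat.log 2 n) ≤ Real.log (2 * A) + Real.log (Real.log n) := by
    rw [← Real.log_mul (by positivity) (by linarith)]
    refine Real.log_le_log (by positivity) ?_
    nlinarith [natLog_two_le_two_mul_log n]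
  have hlogAL0 : 0 ≤ Real.log (A * Nat.log 2 n) := Real.log_nonneg (by nlinarith)
  rw [← Real.log_le_iff_le_exp (by positivity), Real.log_mul (by positivity) (by positivity),
    Real.log_pow]
  calc Real.log k + recDepth k * Real.log (A * Nat.log 2 n)
      ≤ Real.log k + 14 * Real.log k * (Real.log (2 * A) + Real.log (Real.log n)) := by
        gcongr
    _ ≤ (15 + 14 * Real.log (2 * A)) * Real.log k * Real.log (Real.log n) := by
        nlinarith [mul_nonneg hlogk hlogA]

theorem recurrence_bound_general
    (T : ℕ → ℕ → ℕ) (C c : ℕ) (hC : 2 ≤ C)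
    (hbase : ∀ n : ℕ, T 3 n ≤ C * Nat.log 2 n)
    (hrec : ∀ k n : ℕ, 4 ≤ k →
      T k n ≤ C * T ((2 * k + 2) / 3) (c * n) * Nat.log 2 n + C * k) :
    ∃ (C' : ℝ) (N₀ : ℕ), 0 < C' ∧ ∀ k n : ℕ, 3 ≤ k → k ≤ n → N₀ ≤ n →
      (T k n : ℝ) ≤ Real.exp (C' * Real.log k * Real.log (Real.log n)) := by
  set A := C * (7 * c + 3)
  have hA : 1 ≤ A := Nat.mul_pos (by omega) (by omega)
  refine ⟨15 + 14 * Real.log (2 * A), 16, ?_, fun k n hk hkn hn => ?_⟩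
  · have : (0 : ℝ) ≤ Real.log (2 * A) := Real.log_nonneg (by norm_cast; omega)
    positivity
  have hL : 1 ≤ Nat.log 2 n := Nat.le_log_of_pow_le one_lt_two (by omega)
  have hM : C * (c * recDepth k + Nat.log 2 n + 2) ≤ A * Nat.log 2 n := by
    have := recDepth_le (k := k) (by omega)
    have := Nat.log_mono_right (b := 2) hkn
    calc C * (c * recDepth k + Nat.log 2 n + 2)
        ≤ C * (c * (7 * Nat.log 2 n) + 3 * Nat.log 2 n) := Nat.mul_le_mul_left C (by nlinarith)
      _ = A * Nat.log 2 n := by ring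
  have hT : T k n ≤ k * (A * Nat.log 2 n) ^ recDepth k :=
    (le_mul_pow_recDepth T C c (by omega) hbase hrec k hk n).trans (by gcongr)
  calc (T k n : ℝ) ≤ (k : ℝ) * (A * Nat.log 2 n) ^ recDepth k := by exact_mod_cast hT
    _ ≤ _ := mul_pow_recDepth_le_exp hA (by omega) hn

/-- **Recurrence analysis for the `k`-district algorithm.** Suppose
`T : ℕ × ℕ → ℕ` satisfies `T(3, n) ≤ C · log n` and, for `k ≥ 4`,
`T(k, n) ≤ C · T(⌈2k/3⌉, c·n) · log n + C · k`, where `C, c ≥ 2` are constants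
(`⌈2k/3⌉ = (2k + 2)/3` in natural division; logarithms base 2).  Then there is a
constant `C'` (depending only on `C` and `c`) such that for all sufficiently
large `n` and all `3 ≤ k ≤ n`,
`T(k, n) ≤ exp(C' · log k · log log n)`. -/
theorem recurrence_bound
    (T : ℕ → ℕ → ℕ) (C c : ℕ) (hC : 2 ≤ C) (hc : 2 ≤ c)
    (hbase : ∀ n : ℕ, T 3 n ≤ C * Nat.log 2 n)
    (hrec : ∀ k n : ℕ, 4 ≤ k →
      T k n ≤ C * T ((2 * k + 2) / 3) (c * n) * Nat.log 2 n + C * k) :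
    ∃ (C' : ℝ) (N₀ : ℕ), 0 < C' ∧ ∀ k n : ℕ, 3 ≤ k → k ≤ n → N₀ ≤ n →
      (T k n : ℝ) ≤ Real.exp (C' * Real.log k * Real.log (Real.log n)) :=
  recurrence_bound_general T C c hC hbase hrec
end
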